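/- Let f be a symmetric separable property, S ⊆ D, and suppose there is an estimator f̂ mapping S-pseudo profiles to reals such that for every distribution p and φ_S drawn from p (i.e., n i.i.d. samples from p, then forming the S-pseudo profile), Pr[|f_S(p) − f̂(φ_S)| ≥ ε] ≤ δ. Then for any finite set F of positive integers and any β ∈ (0,1], the (β,S)-approximate pseudo PML distribution p^β_{φ_S} satisfies Pr[|f_S(p) − f_S(p^β_{φ_S})| ≥ 2ε] ≤ (δ·(n+1)^{|F|}/β)·1 + Pr[Freq(φ_S) ⊄ F], where the first term can be restricted to the event Freq(φ_S) ⊆ F. -/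

import Mathlib

open Finset
open scoped BigOperators Classical

namespace PML

noncomputable section

variable {D : Type*} [Fintype D] [DecidableEq D]

/-- `p` is a probability distribution on the finite domain `D`. -/
def IsDist (p : D → ℝ) : Prop := (∀ x, 0 ≤ p x) ∧ ∑ x, p x = 1

/-- Probability of observing the sequence `y` of `n` i.i.d. samples from `p`. -/
def seqProb (n : ℕ) (p : D → ℝ) (y : Fin n → D) : ℝ := ∏ i, p (y i)

/-- Probability of an event over sequences of `n` i.i.d. samples from `p`. -/
def prEvent (n : ℕ) (p : D → ℝ) (P : (Fin n → D) → Prop) : ℝ :=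
  ∑ y : Fin n → D, if P y then seqProb n p y else 0

/-- Frequency (multiplicity) of symbol `x` in the sequence `y`. -/
def freq (n : ℕ) (y : Fin n → D) (x : D) : ℕ :=
  (Finset.univ.filter (fun i => y i = x)).card

/-- The `S`-pseudo profile of the sequence `y`: the number of elements of `S`
with frequency `j`. -/
def profS (n : ℕ) (S : Finset D) (y : Fin n → D) : ℕ → ℕ :=
  fun j => (S.filter (fun x => freq n y x = j)).card

/-- Probability under `p` of observing the `S`-pseudo profile `φ` (on positive
frequencies). -/
def profProb (n : ℕ) (p : D → ℝ) (S : Finset D) (φ : ℕ → ℕ) : ℝ :=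
  ∑ y : Fin n → D, if (∀ j, 1 ≤ j → profS n S y j = φ j) then seqProb n p y else 0

/-- The set of distinct (positive) frequencies appearing in a profile `φ`. -/
def Freqs (φ : ℕ → ℕ) : Set ℕ := {j | 1 ≤ j ∧ φ j ≠ 0}

end

/-!
On the event `Freq(φ_S) ⊆ F` a profile is determined by its values on `F`, each at most `n`, so
at most `(n+1)^|F|` profiles occur there. If a profile `φ` has
`|f_S(p) - f_S(p^β_φ)| ≥ 2ε`, then by the triangle inequality `f̂(φ)` is `ε`-far from `f_S(p)` or
from `f_S(p^β_φ)`; the estimator guarantee bounds `P(p, φ)` by `δ` in the first case and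
`P(p^β_φ, φ)` by `δ` in the second, and `β`-approximation turns either into `P(p, φ) ≤ δ/β`.
Summing over the possible profiles gives the bound.
-/

section Events

variable {D : Type*} {n : ℕ} {p : D → ℝ}

lemma seqProb_nonneg (hp : ∀ x, 0 ≤ p x) (y : Fin n → D) : 0 ≤ seqProb n p y :=
  prod_nonneg fun i _ => hp (y i)

variable [Fintype D]

lemma prEvent_nonneg (hp : ∀ x, 0 ≤ p x) (P : (Fin n → D) → Prop) : 0 ≤ prEvent n p P :=
  sum_nonneg fun y _ => by split_ifs <;> simp [seqProb_nonneg hp]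

lemma prEvent_mono (hp : ∀ x, 0 ≤ p x) {P Q : (Fin n → D) → Prop} (h : ∀ y, P y → Q y) :
    prEvent n p P ≤ prEvent n p Q :=
  sum_le_sum fun y _ => by
    by_cases hP : P y
    · simp [hP, h y hP]
    · rw [if_neg hP]
      split_ifs
      exacts [seqProb_nonneg hp y, le_rfl]

lemma prEvent_le_of_forall {P : (Fin n → D) → Prop} {c : ℝ} (hc : 0 ≤ c)
    (h : ∀ y₀, P y₀ → prEvent n p P ≤ c) : prEvent n p P ≤ c := by
  by_cases hP : ∃ y₀, P y₀
  · obtain ⟨y₀, hy₀⟩ := hP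
    exact h y₀ hy₀
  · simp only [not_exists] at hP
    simpa [prEvent, hP] using hc

lemma prEvent_le_and_add_not (hp : ∀ x, 0 ≤ p x) (P Q : (Fin n → D) → Prop) :
    prEvent n p P ≤ prEvent n p (fun y => P y ∧ Q y) + prEvent n p (fun y => ¬ Q y) := by
  rw [prEvent, prEvent, prEvent, ← sum_add_distrib]
  refine sum_le_sum fun y _ => ?_
  by_cases hP : P y <;> by_cases hQ : Q y <;> simp [hP, hQ, seqProb_nonneg hp]

lemma prEvent_le_card_mul {α : Type*} [Fintype α] (T : (Fin n → D) → α)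
    {P : (Fin n → D) → Prop} {c : ℝ}
    (h : ∀ a, prEvent n p (fun y => P y ∧ T y = a) ≤ c) :
    prEvent n p P ≤ Fintype.card α * c := by
  have hfibres : prEvent n p P = ∑ a, prEvent n p (fun y => P y ∧ T y = a) := by
    simp only [prEvent]
    rw [sum_comm]
    refine sum_congr rfl fun y _ => ?_
    by_cases hP : P y <;> simp [hP]
  rw [hfibres, ← nsmul_eq_mul, ← card_univ]
  exact sum_le_card_nsmul _ _ _ fun a _ => h a

end Events

section Profiles

variable {D : Type*} [DecidableEq D] {n : ℕ} {S : Finset D} {y y' : Fin n → D}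

lemma freq_le (x : D) : freq n y x ≤ n :=
  (card_filter_le _ _).trans (by simp)

lemma profS_le {j : ℕ} (hj : 1 ≤ j) : profS n S y j ≤ n := by
  calc profS n S y j ≤ (univ.image y).card := card_le_card fun x hx => by
        obtain ⟨i, hi⟩ : (univ.filter fun i => y i = x).Nonempty :=
          card_pos.1 (by have := (mem_filter.1 hx).2; unfold freq at this; omega)
        exact mem_image.2 ⟨i, mem_univ _, (mem_filter.1 hi).2⟩
    _ ≤ n := card_image_le.trans_eq (by simp)

lemma sum_profS_range : ∑ j ∈ range (n + 1), profS n S y j = S.card :=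
  (card_eq_sum_card_fiberwise fun x _ => mem_range.2 (Nat.lt_succ_of_le (freq_le x))).symm

/-- The count at frequency `0` is determined by the others, as they all add up to `|S|`. -/
lemma profS_ext (h : ∀ j, 1 ≤ j → profS n S y j = profS n S y' j) :
    profS n S y = profS n S y' := by
  funext j
  rcases j with _ | j
  · have hy := sum_profS_range (S := S) (y := y)
    have hy' := sum_profS_range (S := S) (y := y')
    rw [sum_range_succ'] at hy hy'
    rw [sum_congr rfl fun j _ => h (j + 1) (Nat.le_add_left 1 j)] at hy
    omega
  · exact h (j + 1) (Nat.le_add_left 1 j)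

/-- The clamp at `n` only puts the key in a type with `(n+1)^|F|` elements: it never acts at
positive frequencies (`profS_le`). -/
def profileKey (n : ℕ) (S : Finset D) (F : Finset ℕ) (y : Fin n → D) : F → Fin (n + 1) :=
  fun j => ⟨min (profS n S y j) n, Nat.lt_succ_of_le (min_le_right _ _)⟩

lemma profS_eq_of_profileKey_eq {F : Finset ℕ} (hy : Freqs (profS n S y) ⊆ ↑F)
    (hy' : Freqs (profS n S y') ⊆ ↑F) (h : profileKey n S F y = profileKey n S F y') :
    profS n S y = profS n S y' := by
  refine profS_ext fun j hj => ?_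
  by_cases hjF : j ∈ F
  · have := congrArg Fin.val (congrFun h ⟨j, hjF⟩)
    simpa [profileKey, profS_le hj] using this
  · have hzero : ∀ z : Fin n → D, Freqs (profS n S z) ⊆ ↑F → profS n S z j = 0 :=
      fun z hz => by_contra fun hne => hjF (hz ⟨hj, hne⟩)
    rw [hzero y hy, hzero y' hy']

end Profiles

section Estimation

variable {D : Type*} [Fintype D] [DecidableEq D] {n : ℕ} {S : Finset D}
  {fhat : (ℕ → ℕ) → ℝ} {ε δ : ℝ}

lemma le_abs_sub_or_le_abs_sub {a b : ℝ} (h : 2 * ε ≤ |a - b|) (c : ℝ) :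
    ε ≤ |a - c| ∨ ε ≤ |b - c| := by
  by_contra! hlt
  have := abs_sub_le a c b
  rw [abs_sub_comm c b] at this
  linarith [hlt.1, hlt.2]

lemma profProb_le_of_far_from_estimate {q : D → ℝ} (hq : ∀ x, 0 ≤ q x) {a : ℝ}
    (hest : prEvent n q (fun y => ε ≤ |a - fhat (profS n S y)|) ≤ δ) (y₀ : Fin n → D)
    (hfar : ε ≤ |a - fhat (profS n S y₀)|) : profProb n q S (profS n S y₀) ≤ δ :=
  (prEvent_mono hq fun y hy => by rwa [profS_ext hy]).trans hest

lemma profProb_le_div_of_far {β : ℝ} (hβ0 : 0 < β) (hβ1 : β ≤ 1) {p q : D → ℝ}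
    (hp : ∀ x, 0 ≤ p x) (hq : ∀ x, 0 ≤ q x) {a b : ℝ}
    (hestp : prEvent n p (fun y => ε ≤ |a - fhat (profS n S y)|) ≤ δ)
    (hestq : prEvent n q (fun y => ε ≤ |b - fhat (profS n S y)|) ≤ δ) (y₀ : Fin n → D)
    (happrox : β * profProb n p S (profS n S y₀) ≤ profProb n q S (profS n S y₀))
    (hfar : 2 * ε ≤ |a - b|) : profProb n p S (profS n S y₀) ≤ δ / β := by
  rcases le_abs_sub_or_le_abs_sub hfar (fhat (profS n S y₀)) with hpfar | hqfar
  · have hδ : 0 ≤ δ := (prEvent_nonneg hp _).trans hestp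
    exact (profProb_le_of_far_from_estimate hp hestp y₀ hpfar).trans (le_div_self hδ hβ0 hβ1)
  · rw [le_div_iff₀' hβ0]
    exact happrox.trans (profProb_le_of_far_from_estimate hq hestq y₀ hqfar)

lemma prEvent_profileKey_eq_le (F : Finset ℕ) {p : D → ℝ} (hp : ∀ x, 0 ≤ p x)
    {B : (Fin n → D) → Prop} {c : ℝ} (hc : 0 ≤ c)
    (hB : ∀ y₀, B y₀ → profProb n p S (profS n S y₀) ≤ c) (k : F → Fin (n + 1)) :
    prEvent n p (fun y => (B y ∧ Freqs (profS n S y) ⊆ ↑F) ∧ profileKey n S F y = k) ≤ c := by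
  refine prEvent_le_of_forall hc fun y₀ ⟨⟨hB₀, hF₀⟩, hk₀⟩ => (prEvent_mono hp ?_).trans (hB y₀ hB₀)
  rintro y ⟨⟨-, hF⟩, hk⟩ j -
  rw [profS_eq_of_profileKey_eq hF hF₀ (hk.trans hk₀.symm)]

end Estimation

section

variable {D : Type*} [Fintype D] [DecidableEq D]

/-- Theorem 3.3: if an estimator `f̂` on `S`-pseudo profiles estimates
`f_S(p) = Σ_{x∈S} g(p_x)` within `ε` except with probability `δ` (for every
distribution), then for any finite frequency set `F`, any `(β,S)`-approximate
pseudo PML distribution family satisfies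
`Pr[|f_S(p) − f_S(p^β_{φ_S})| ≥ 2ε] ≤ δ(n+1)^{|F|}/β + Pr[Freq(φ_S) ⊄ F]`. -/
theorem pseudo_pml_estimation (n : ℕ) (S : Finset D) (g : ℝ → ℝ)
    (p : D → ℝ) (hp : IsDist p) (fhat : (ℕ → ℕ) → ℝ) (ε δ β : ℝ)
    (hβ0 : 0 < β) (hβ1 : β ≤ 1)
    (hest : ∀ q : D → ℝ, IsDist q →
      prEvent n q (fun y => ε ≤ |(∑ x ∈ S, g (q x)) - fhat (profS n S y)|) ≤ δ)
    (F : Finset ℕ)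
    (pβ : (ℕ → ℕ) → (D → ℝ))
    (hpβdist : ∀ φ : ℕ → ℕ, IsDist (pβ φ))
    (hpβapprox : ∀ (φ : ℕ → ℕ) (q : D → ℝ), IsDist q →
      β * profProb n q S φ ≤ profProb n (pβ φ) S φ) :
    prEvent n p (fun y =>
        2 * ε ≤ |(∑ x ∈ S, g (p x)) - ∑ x ∈ S, g (pβ (profS n S y) x)|)
      ≤ δ * (n + 1) ^ F.card / β
        + prEvent n p (fun y => ¬ Freqs (profS n S y) ⊆ ↑F) := by
  have hδβ : 0 ≤ δ / β := div_nonneg ((prEvent_nonneg hp.1 _).trans (hest p hp)) hβ0.le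
  have hbad : ∀ y₀ : Fin n → D,
      2 * ε ≤ |(∑ x ∈ S, g (p x)) - ∑ x ∈ S, g (pβ (profS n S y₀) x)| →
        profProb n p S (profS n S y₀) ≤ δ / β := fun y₀ hfar =>
    profProb_le_div_of_far hβ0 hβ1 hp.1 (hpβdist _).1 (hest p hp) (hest _ (hpβdist _)) y₀
      (hpβapprox _ p hp) hfar
  refine (prEvent_le_and_add_not hp.1 _ _).trans (add_le_add_left ?_ _)
  calc _ ≤ Fintype.card (F → Fin (n + 1)) * (δ / β) :=
        prEvent_le_card_mul (profileKey n S F)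
          (prEvent_profileKey_eq_le F hp.1 hδβ hbad)
    _ = δ * (n + 1) ^ F.card / β := by
      simp only [Fintype.card_fun, Fintype.card_fin, Fintype.card_coe]
      push_cast
      ring

end

end PML
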